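/- Let X_R be a random diagonal matrix in ℝ^{m×m} and X_ρ a random diagonal matrix in ℝ^{n×n}, independent of each other, with E[X_R] = e_R I, E[X_ρ] = e_ρ I, max_{i,j}|Cov((X_R)_ii,(X_R)_jj)| ≤ ε_R and max_{i,j}|Cov((X_ρ)_ii,(X_ρ)_jj)| ≤ ε_ρ. Then for any matrix R ∈ ℝ^{m×n}, ‖E[R ⊗ (X_R R X_ρ)] − E[(X_R R X_ρ) ⊗ (X_R R X_ρ)]‖₂ ≤ ‖R‖₂² ( |e_R e_ρ| · |1 − e_R e_ρ| + e_ρ² ε_R + e_R² ε_ρ + ε_R ε_ρ ). -/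

import Mathlib

/-! Write `Y = D_R R D_ρ` with `D_R = diag X_R`, `D_ρ = diag X_ρ`. Independence factorizes the
entrywise expectations: `E[R ⊗ Y] = e_R e_ρ (R ⊗ R)`, and, since
`Y ⊗ Y = (D_R ⊗ D_R)(R ⊗ R)(D_ρ ⊗ D_ρ)` with diagonal outer factors,
`E[Y ⊗ Y] = (e_R² I + C_R)(R ⊗ R)(e_ρ² I + C_ρ)`, where `C_R`, `C_ρ` are the diagonal matrices of
covariances indexed by pairs. Expanding the difference into four terms, the triangle inequality,
submultiplicativity, `‖R ⊗ R‖ ≤ ‖R‖²` and `‖C‖ = max |C_pp|` give the bound. -/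

open Matrix MeasureTheory ProbabilityTheory
open scoped Kronecker ENNReal

/-- Spectral norm (ℓ²-operator norm) of a real matrix. -/
noncomputable def specNorm {m n : Type*} [Fintype m] [Fintype n] [DecidableEq n]
    (M : Matrix m n ℝ) : ℝ :=
  ‖LinearMap.toContinuousLinearMap (Matrix.toEuclideanLin M)‖

/-- Entrywise expectation of a random matrix. -/
noncomputable def matExp {Ω : Type*} [MeasurableSpace Ω] (μ : Measure Ω)
    {m n : Type*} (X : Ω → Matrix m n ℝ) : Matrix m n ℝ :=
  Matrix.of fun i j => ∫ ω, X ω i j ∂μ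

/-- Covariance of two real random variables. -/
noncomputable def cov {Ω : Type*} [MeasurableSpace Ω] (μ : Measure Ω) (f g : Ω → ℝ) : ℝ :=
  (∫ ω, f ω * g ω ∂μ) - (∫ ω, f ω ∂μ) * (∫ ω, g ω ∂μ)

open scoped Matrix.Norms.L2Operator

namespace Matrix

variable {𝕜 : Type*} [RCLike 𝕜] {l m n p : Type*}

lemma sum_norm_sq_mulVec_le [Fintype m] [Fintype n] [DecidableEq n] (A : Matrix m n 𝕜)
    (x : n → 𝕜) : ∑ i, ‖(A *ᵥ x) i‖ ^ 2 ≤ ‖A‖ ^ 2 * ∑ j, ‖x j‖ ^ 2 := by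
  have h := pow_le_pow_left₀ (norm_nonneg _) (A.l2_opNorm_mulVec (WithLp.toLp 2 x)) 2
  simpa [mul_pow, EuclideanSpace.norm_sq_eq] using h

lemma l2_opNorm_le_of_sum_norm_sq_mulVec_le [Fintype m] [Fintype n] [DecidableEq n]
    {A : Matrix m n 𝕜} {c : ℝ} (hc : 0 ≤ c)
    (h : ∀ x, ∑ i, ‖(A *ᵥ x) i‖ ^ 2 ≤ c ^ 2 * ∑ j, ‖x j‖ ^ 2) : ‖A‖ ≤ c := by
  rw [l2_opNorm_def]
  refine ContinuousLinearMap.opNorm_le_bound _ hc fun v => ?_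
  refine (sq_le_sq₀ (norm_nonneg _) (by positivity)).mp ?_
  simpa [mul_pow, EuclideanSpace.norm_sq_eq] using h v.ofLp

lemma kronecker_mulVec_apply [Fintype m] [Fintype p] {α : Type*} [NonUnitalSemiring α]
    (A : Matrix l m α) (B : Matrix n p α) (x : m × p → α) (i : l) (k : n) :
    (A ⊗ₖ B *ᵥ x) (i, k) = (A *ᵥ fun j => (B *ᵥ fun q => x (j, q)) k) i := by
  simp [mulVec, dotProduct, Fintype.sum_prod_type, Finset.mul_sum, mul_assoc]

lemma l2_opNorm_kronecker_le [Fintype l] [Fintype m] [Fintype n] [Fintype p] [DecidableEq m]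
    [DecidableEq p] (A : Matrix l m 𝕜) (B : Matrix n p 𝕜) :
    ‖A ⊗ₖ B‖ ≤ ‖A‖ * ‖B‖ := by
  refine l2_opNorm_le_of_sum_norm_sq_mulVec_le (by positivity) fun x => ?_
  set y : m → n → 𝕜 := fun j => B *ᵥ fun q => x (j, q)
  calc ∑ ik : l × n, ‖(A ⊗ₖ B *ᵥ x) ik‖ ^ 2
      = ∑ k, ∑ i, ‖(A *ᵥ fun j => y j k) i‖ ^ 2 := by
        simp only [Fintype.sum_prod_type, kronecker_mulVec_apply]
        exact Finset.sum_comm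
    _ ≤ ∑ k, ‖A‖ ^ 2 * ∑ j, ‖y j k‖ ^ 2 :=
        Finset.sum_le_sum fun k _ => sum_norm_sq_mulVec_le A _
    _ = ‖A‖ ^ 2 * ∑ j, ∑ k, ‖(B *ᵥ fun q => x (j, q)) k‖ ^ 2 := by
        rw [← Finset.mul_sum, Finset.sum_comm]
    _ ≤ ‖A‖ ^ 2 * ∑ j, ‖B‖ ^ 2 * ∑ q, ‖x (j, q)‖ ^ 2 := by
        gcongr with j; exact sum_norm_sq_mulVec_le B _
    _ = (‖A‖ * ‖B‖) ^ 2 * ∑ jq : m × p, ‖x jq‖ ^ 2 := by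
        rw [Fintype.sum_prod_type, ← Finset.mul_sum, mul_pow, mul_assoc]

lemma l2_opNorm_diagonal_le [Fintype n] [DecidableEq n] [Nonempty n] {d : n → 𝕜} {c : ℝ}
    (h : ∀ i, ‖d i‖ ≤ c) : ‖diagonal d‖ ≤ c :=
  (l2_opNorm_diagonal d).trans_le ((pi_norm_le_iff_of_nonempty d).2 h)

lemma kronecker_diagonal_mul_mul_diagonal [Fintype l] [Fintype m] [Fintype n] [Fintype p]
    [DecidableEq l] [DecidableEq m] [DecidableEq n] [DecidableEq p] {α : Type*} [CommSemiring α]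
    (x : l → α) (A : Matrix l m α) (y : m → α) (x' : n → α) (B : Matrix n p α) (y' : p → α) :
    (diagonal x * A * diagonal y) ⊗ₖ (diagonal x' * B * diagonal y') =
      diagonal (fun i : l × n => x i.1 * x' i.2) * (A ⊗ₖ B) *
        diagonal (fun j : m × p => y j.1 * y' j.2) := by
  rw [mul_kronecker_mul, mul_kronecker_mul, diagonal_kronecker_diagonal,
    diagonal_kronecker_diagonal]

lemma l2_opNorm_mul_smul_sub_mul_mul_le {ι κ : Type*} [Fintype ι] [Fintype κ] [DecidableEq ι]
    [DecidableEq κ] (K : Matrix ι κ ℝ) (D₁ : Matrix ι ι ℝ) (D₂ : Matrix κ κ ℝ) (a b : ℝ) :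
    ‖(a * b) • K - (a ^ 2 • 1 + D₁) * K * (b ^ 2 • 1 + D₂)‖ ≤
      ‖K‖ * (|a * b| * |1 - a * b| + b ^ 2 * ‖D₁‖ + a ^ 2 * ‖D₂‖ + ‖D₁‖ * ‖D₂‖) := by
  have hexpand : (a * b) • K - (a ^ 2 • 1 + D₁) * K * (b ^ 2 • 1 + D₂) =
      (a * b * (1 - a * b)) • K - b ^ 2 • (D₁ * K) - a ^ 2 • (K * D₂) - D₁ * K * D₂ := by
    simp only [Matrix.add_mul, Matrix.mul_add, Matrix.smul_mul, Matrix.mul_smul, Matrix.one_mul,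
      Matrix.mul_one]
    module
  rw [hexpand]
  calc _ ≤ ‖(a * b * (1 - a * b)) • K‖ + ‖b ^ 2 • (D₁ * K)‖ + ‖a ^ 2 • (K * D₂)‖
        + ‖D₁ * K * D₂‖ :=
        norm_sub_le_of_le (norm_sub_le_of_le (norm_sub_le _ _) le_rfl) le_rfl
    _ ≤ |a * b| * |1 - a * b| * ‖K‖ + b ^ 2 * (‖D₁‖ * ‖K‖) + a ^ 2 * (‖K‖ * ‖D₂‖)
        + ‖D₁‖ * ‖K‖ * ‖D₂‖ := by
      simp only [norm_smul, Real.norm_eq_abs, abs_mul, abs_sq]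
      gcongr
      · exact l2_opNorm_mul _ _
      · exact l2_opNorm_mul _ _
      · exact (l2_opNorm_mul _ _).trans (by gcongr; exact l2_opNorm_mul _ _)
    _ = _ := by ring

end Matrix

lemma specNorm_eq_l2_opNorm {m n : Type*} [Fintype m] [Fintype n] [DecidableEq n]
    (M : Matrix m n ℝ) : specNorm M = ‖M‖ := rfl

section

variable {Ω : Type*} [MeasurableSpace Ω] {μ : Measure Ω}

lemma integral_mul_eq_mul_integral_add_cov (f g : Ω → ℝ) :
    ∫ ω, f ω * g ω ∂μ = (∫ ω, f ω ∂μ) * (∫ ω, g ω ∂μ) + cov μ f g := by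
  rw [cov, add_sub_cancel]

noncomputable def covDiag {ι : Type*} [DecidableEq ι] (μ : Measure Ω) (X : Ω → ι → ℝ) :
    Matrix (ι × ι) (ι × ι) ℝ :=
  diagonal fun p => cov μ (fun ω => X ω p.1) (fun ω => X ω p.2)

lemma l2_opNorm_covDiag_le {ι : Type*} [Fintype ι] [DecidableEq ι] [Nonempty ι]
    {X : Ω → ι → ℝ} {ε : ℝ} (h : ∀ i j, |cov μ (fun ω => X ω i) (fun ω => X ω j)| ≤ ε) :
    ‖covDiag μ X‖ ≤ ε :=
  l2_opNorm_diagonal_le fun p => h p.1 p.2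

lemma matExp_kronecker_left {l m n p : Type*} (A : Matrix l m ℝ) (X : Ω → Matrix n p ℝ) :
    matExp μ (fun ω => A ⊗ₖ X ω) = A ⊗ₖ matExp μ X := by
  ext ⟨i, k⟩ ⟨j, l⟩
  simp [matExp, integral_const_mul]

variable {ι κ : Type*} [Fintype ι] [Fintype κ] [DecidableEq ι] [DecidableEq κ]
  {X : Ω → ι → ℝ} {Y : Ω → κ → ℝ}

lemma matExp_diagonal_mul_mul_diagonal (hX : ∀ i, AEStronglyMeasurable (fun ω => X ω i) μ)
    (hY : ∀ j, AEStronglyMeasurable (fun ω => Y ω j) μ) (hXY : IndepFun X Y μ)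
    (R : Matrix ι κ ℝ) :
    matExp μ (fun ω => diagonal (X ω) * R * diagonal (Y ω)) =
      diagonal (fun i => ∫ ω, X ω i ∂μ) * R * diagonal (fun j => ∫ ω, Y ω j ∂μ) := by
  ext i j
  have hindep : ∫ ω, X ω i * Y ω j ∂μ = (∫ ω, X ω i ∂μ) * ∫ ω, Y ω j ∂μ :=
    (hXY.comp (measurable_pi_apply i) (measurable_pi_apply j)).integral_mul_eq_mul_integral
      (hX i) (hY j)
  simp only [matExp, of_apply, mul_diagonal, diagonal_mul]
  calc ∫ ω, X ω i * R i j * Y ω j ∂μ = R i j * ∫ ω, X ω i * Y ω j ∂μ := by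
        rw [← integral_const_mul]; congr 1; ext ω; ring
    _ = _ := by rw [hindep]; ring

lemma matExp_kronecker_diagonal_mul_mul_diagonal
    (hX : ∀ i, AEStronglyMeasurable (fun ω => X ω i) μ)
    (hY : ∀ j, AEStronglyMeasurable (fun ω => Y ω j) μ) (hXY : IndepFun X Y μ) {a b : ℝ}
    (ha : ∀ i, ∫ ω, X ω i ∂μ = a) (hb : ∀ j, ∫ ω, Y ω j ∂μ = b) (R : Matrix ι κ ℝ) :
    matExp μ (fun ω => R ⊗ₖ (diagonal (X ω) * R * diagonal (Y ω))) = (a * b) • (R ⊗ₖ R) := by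
  rw [matExp_kronecker_left, matExp_diagonal_mul_mul_diagonal hX hY hXY]
  simp only [ha, hb, ← smul_one_eq_diagonal, Matrix.smul_mul, Matrix.mul_smul, Matrix.one_mul,
    Matrix.mul_one, kronecker_smul, smul_smul, mul_comm b a]

lemma matExp_kronecker_self_diagonal_mul_mul_diagonal
    (hX : ∀ i, AEStronglyMeasurable (fun ω => X ω i) μ)
    (hY : ∀ j, AEStronglyMeasurable (fun ω => Y ω j) μ) (hXY : IndepFun X Y μ) {a b : ℝ}
    (ha : ∀ i, ∫ ω, X ω i ∂μ = a) (hb : ∀ j, ∫ ω, Y ω j ∂μ = b) (R : Matrix ι κ ℝ) :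
    matExp μ (fun ω => (diagonal (X ω) * R * diagonal (Y ω)) ⊗ₖ
        (diagonal (X ω) * R * diagonal (Y ω))) =
      (a ^ 2 • 1 + covDiag μ X) * (R ⊗ₖ R) * (b ^ 2 • 1 + covDiag μ Y) := by
  have hXY₂ := hXY.comp (φ := fun x (p : ι × ι) => x p.1 * x p.2)
    (ψ := fun y (q : κ × κ) => y q.1 * y q.2) (by fun_prop) (by fun_prop)
  simp only [kronecker_diagonal_mul_mul_diagonal]
  rw [matExp_diagonal_mul_mul_diagonal (X := fun ω (p : ι × ι) => X ω p.1 * X ω p.2)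
    (Y := fun ω (q : κ × κ) => Y ω q.1 * Y ω q.2) (fun p => (hX p.1).mul (hX p.2))
    (fun q => (hY q.1).mul (hY q.2)) hXY₂]
  simp only [integral_mul_eq_mul_integral_add_cov, ha, hb, ← sq, covDiag, smul_one_eq_diagonal,
    diagonal_add]

end

theorem stmt_11_general {Ω : Type*} [MeasurableSpace Ω] (μ : Measure Ω)
    (m n : ℕ) (XR : Ω → Fin m → ℝ) (Xρ : Ω → Fin n → ℝ)
    (hXR : ∀ i, MemLp (fun ω => XR ω i) 2 μ)
    (hXρ : ∀ i, MemLp (fun ω => Xρ ω i) 2 μ)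
    (hIndep : IndepFun XR Xρ μ)
    (eR eρ εR ερ : ℝ)
    (hmR : ∀ i, ∫ ω, XR ω i ∂μ = eR)
    (hmρ : ∀ i, ∫ ω, Xρ ω i ∂μ = eρ)
    (hcR : ∀ i j, |cov μ (fun ω => XR ω i) (fun ω => XR ω j)| ≤ εR)
    (hcρ : ∀ i j, |cov μ (fun ω => Xρ ω i) (fun ω => Xρ ω j)| ≤ ερ)
    (R : Matrix (Fin m) (Fin n) ℝ) :
    specNorm ((matExp μ fun ω =>
          R ⊗ₖ (Matrix.diagonal (XR ω) * R * Matrix.diagonal (Xρ ω))) -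
        matExp μ fun ω =>
          (Matrix.diagonal (XR ω) * R * Matrix.diagonal (Xρ ω)) ⊗ₖ
            (Matrix.diagonal (XR ω) * R * Matrix.diagonal (Xρ ω)))
      ≤ specNorm R ^ 2 *
          (|eR * eρ| * |1 - eR * eρ| + eρ ^ 2 * εR + eR ^ 2 * ερ + εR * ερ) := by
  rcases isEmpty_or_nonempty (Fin m) with hm | hm
  · simp [specNorm_eq_l2_opNorm, Subsingleton.elim R 0]
  rcases isEmpty_or_nonempty (Fin n) with hn | hn
  · simp [specNorm_eq_l2_opNorm, Subsingleton.elim R 0]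
  have hXRm i := (hXR i).aestronglyMeasurable
  have hXρm j := (hXρ j).aestronglyMeasurable
  rw [specNorm_eq_l2_opNorm, specNorm_eq_l2_opNorm,
    matExp_kronecker_diagonal_mul_mul_diagonal hXRm hXρm hIndep hmR hmρ,
    matExp_kronecker_self_diagonal_mul_mul_diagonal hXRm hXρm hIndep hmR hmρ]
  have hCR : ‖covDiag μ XR‖ ≤ εR := l2_opNorm_covDiag_le hcR
  have hCρ : ‖covDiag μ Xρ‖ ≤ ερ := l2_opNorm_covDiag_le hcρ
  have hK : ‖R ⊗ₖ R‖ ≤ ‖R‖ ^ 2 := (l2_opNorm_kronecker_le R R).trans_eq (sq ‖R‖).symm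
  have hεR : 0 ≤ εR := (norm_nonneg _).trans hCR
  calc _ ≤ ‖R ⊗ₖ R‖ * (|eR * eρ| * |1 - eR * eρ| + eρ ^ 2 * ‖covDiag μ XR‖
          + eR ^ 2 * ‖covDiag μ Xρ‖ + ‖covDiag μ XR‖ * ‖covDiag μ Xρ‖) :=
        l2_opNorm_mul_smul_sub_mul_mul_le _ _ _ _ _
    _ ≤ _ := by gcongr

/-- For independent random diagonal matrices `X_R`, `X_ρ` with `E[X_R] = e_R I`,
`E[X_ρ] = e_ρ I` and covariances bounded by `ε_R`, `ε_ρ`, one has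
`‖E[R ⊗ (X_R R X_ρ)] - E[(X_R R X_ρ) ⊗ (X_R R X_ρ)]‖₂ ≤
‖R‖₂² (|e_R e_ρ| |1 - e_R e_ρ| + e_ρ² ε_R + e_R² ε_ρ + ε_R ε_ρ)`. -/
theorem stmt_11 {Ω : Type*} [MeasurableSpace Ω] (μ : Measure Ω) [IsProbabilityMeasure μ]
    (m n : ℕ) (XR : Ω → Fin m → ℝ) (Xρ : Ω → Fin n → ℝ)
    (hXR : ∀ i, MemLp (fun ω => XR ω i) 2 μ)
    (hXρ : ∀ i, MemLp (fun ω => Xρ ω i) 2 μ)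
    (hIndep : IndepFun XR Xρ μ)
    (eR eρ εR ερ : ℝ)
    (hmR : ∀ i, ∫ ω, XR ω i ∂μ = eR)
    (hmρ : ∀ i, ∫ ω, Xρ ω i ∂μ = eρ)
    (hcR : ∀ i j, |cov μ (fun ω => XR ω i) (fun ω => XR ω j)| ≤ εR)
    (hcρ : ∀ i j, |cov μ (fun ω => Xρ ω i) (fun ω => Xρ ω j)| ≤ ερ)
    (R : Matrix (Fin m) (Fin n) ℝ) :
    specNorm ((matExp μ fun ω =>
          R ⊗ₖ (Matrix.diagonal (XR ω) * R * Matrix.diagonal (Xρ ω))) -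
        matExp μ fun ω =>
          (Matrix.diagonal (XR ω) * R * Matrix.diagonal (Xρ ω)) ⊗ₖ
            (Matrix.diagonal (XR ω) * R * Matrix.diagonal (Xρ ω)))
      ≤ specNorm R ^ 2 *
          (|eR * eρ| * |1 - eR * eρ| + eρ ^ 2 * εR + eR ^ 2 * ερ + εR * ερ) :=
  stmt_11_general μ m n XR Xρ hXR hXρ hIndep eR eρ εR ερ hmR hmρ hcR hcρ R
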